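/- Let ν > 0 and let M be a random variable taking values in the positive integers with lim_{x→∞} (log P[M > x]) / x = −α for some α > 0. Define the random variable T on the positive integers by P[T > t] = E[ (1 − M e^{−(M−1)ν}(1 − e^{−ν}) )^t ] for t ∈ ℕ. Then lim_{t→∞} (log P[T > t]) / (log t) = −α/ν. -/

import Mathlib

/-!
Write `p(m) = m e^{-(m-1)ν}(1 - e^{-ν})` and `L = log t`. If `a > 1/ν`, then on `{M > aL}` one has
`t p(M) ≲ L t^{1-νa} → 0`, so by Bernoulli's inequality `(1 - p(M))^t ≥ 1/2` there and
`P[T > t] ≥ P[M > aL] / 2`. If `a < 1/ν`, then on `{M ≤ aL}` one has `p(M) ≥ (1 - e^{-ν}) t^{-νa}`,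
so `(1 - p(M))^t ≤ exp(-(1 - e^{-ν}) t^{1-νa})`, which is negligible against
`P[M > aL] = t^{-αa + o(1)}`; hence `P[T > t] ≤ 2 P[M > aL]`. Taking logarithms and letting
`a → 1/ν` from both sides gives the exponent `-α/ν`.
-/

open MeasureTheory Filter Real Set Topology

noncomputable def successProb (ν : ℝ) (m : ℕ) : ℝ :=
  m * exp (-((m : ℝ) - 1) * ν) * (1 - exp (-ν))

section successProb

variable {ν : ℝ}

lemma successProb_nonneg (hν : 0 ≤ ν) (m : ℕ) : 0 ≤ successProb ν m := by
  have : 0 ≤ 1 - exp (-ν) := sub_nonneg.2 (exp_le_one_iff.2 (by linarith))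
  unfold successProb
  positivity

lemma successProb_le_one_sub_exp_pow (hν : 0 ≤ ν) (m : ℕ) :
    successProb ν m ≤ 1 - exp (-ν) ^ m := by
  set q := exp (-ν)
  have hq0 : 0 ≤ q := (exp_pos _).le
  have hq1 : q ≤ 1 := exp_le_one_iff.2 (by linarith)
  rcases m with _ | k
  · simp [successProb]
  have hsum : ((k + 1 : ℕ) : ℝ) * q ^ k ≤ ∑ i ∈ Finset.range (k + 1), q ^ i := by
    simpa using Finset.card_nsmul_le_sum (Finset.range (k + 1)) (q ^ ·) (q ^ k)
      fun i hi => pow_le_pow_of_le_one hq0 hq1 (Nat.lt_succ_iff.1 (Finset.mem_range.1 hi))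
  have hexp : exp (-(((k + 1 : ℕ) : ℝ) - 1) * ν) = q ^ k := by
    rw [← exp_nat_mul]
    push_cast
    ring_nf
  rw [successProb, hexp, ← neg_sub (q ^ (k + 1)), ← geom_sum_mul]
  nlinarith

lemma successProb_lt_one (hν : 0 ≤ ν) (m : ℕ) : successProb ν m < 1 :=
  (successProb_le_one_sub_exp_pow hν m).trans_lt (by linarith [pow_pos (exp_pos (-ν)) m])

lemma one_sub_exp_mul_exp_le_successProb (hν : 0 ≤ ν) {m : ℕ} {x : ℝ} (hm : 1 ≤ m)
    (hmx : (m : ℝ) ≤ x) : (1 - exp (-ν)) * exp (-(ν * x)) ≤ successProb ν m := by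
  have hm' : (1 : ℝ) ≤ m := by exact_mod_cast hm
  have hc : 0 ≤ 1 - exp (-ν) := sub_nonneg.2 (exp_le_one_iff.2 (by linarith))
  have hx : exp (-(ν * x)) ≤ m * exp (-((m : ℝ) - 1) * ν) :=
    (exp_le_exp.2 (by nlinarith)).trans (le_mul_of_one_le_left (exp_pos _).le hm')
  calc (1 - exp (-ν)) * exp (-(ν * x)) ≤ (1 - exp (-ν)) * (m * exp (-((m : ℝ) - 1) * ν)) := by
        gcongr
    _ = successProb ν m := by unfold successProb; ring

lemma mul_exp_neg_mul_le_inv (hν : 0 < ν) (y : ℝ) : y * exp (-(ν * y)) ≤ ν⁻¹ := by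
  rw [exp_neg, ← div_eq_mul_inv, div_le_iff₀ (exp_pos _), inv_mul_eq_div, le_div_iff₀ hν]
  linarith [add_one_le_exp (ν * y)]

lemma successProb_le_of_le (hν : 0 < ν) {m : ℕ} {x : ℝ} (hx : 0 ≤ x) (hxm : x ≤ m) :
    successProb ν m ≤ exp ν * (x + ν⁻¹) * exp (-(ν * x)) := by
  have hsplit : (m : ℝ) * exp (-(ν * m))
      = x * exp (-(ν * m)) + ((m : ℝ) - x) * exp (-(ν * (m - x))) * exp (-(ν * x)) := by
    rw [mul_assoc _ (exp _), ← exp_add]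
    ring_nf
  have h1 : x * exp (-(ν * m)) ≤ x * exp (-(ν * x)) := by gcongr
  have h2 := mul_le_mul_of_nonneg_right (mul_exp_neg_mul_le_inv hν (m - x)) (exp_pos (-(ν * x))).le
  calc successProb ν m = exp ν * ((m : ℝ) * exp (-(ν * m))) * (1 - exp (-ν)) := by
        rw [successProb, show -((m : ℝ) - 1) * ν = ν + -(ν * m) by ring, exp_add]
        ring
    _ ≤ exp ν * ((m : ℝ) * exp (-(ν * m))) * 1 := by
        gcongr
        linarith [exp_pos (-ν)]
    _ ≤ exp ν * ((x + ν⁻¹) * exp (-(ν * x))) := by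
        rw [mul_one]
        gcongr exp ν * ?_
        linarith
    _ = exp ν * (x + ν⁻¹) * exp (-(ν * x)) := by ring

end successProb

section OneSubPow

variable {Ω : Type*} {mΩ : MeasurableSpace Ω} {P : Measure Ω} [IsProbabilityMeasure P] {p : Ω → ℝ}

lemma integrable_one_sub_pow (hp : Measurable p) (h0 : ∀ ω, 0 ≤ p ω) (h1 : ∀ ω, p ω < 1)
    (t : ℕ) : Integrable (fun ω => (1 - p ω) ^ t) P :=
  .of_bound ((hp.const_sub 1).pow_const t).aestronglyMeasurable 1 (.of_forall fun ω => by
    rw [norm_pow, norm_eq_abs, abs_of_pos (sub_pos.2 (h1 ω))]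
    exact pow_le_one₀ (by linarith [h1 ω]) (by linarith [h0 ω]))

lemma integral_one_sub_pow_pos (hp : Measurable p) (h0 : ∀ ω, 0 ≤ p ω) (h1 : ∀ ω, p ω < 1)
    (t : ℕ) : 0 < ∫ ω, (1 - p ω) ^ t ∂P := by
  have hpos : ∀ ω, 0 < (1 - p ω) ^ t := fun ω => pow_pos (sub_pos.2 (h1 ω)) t
  rw [integral_pos_iff_support_of_nonneg (fun ω => (hpos ω).le) (integrable_one_sub_pow hp h0 h1 t),
    Function.support_eq_univ fun ω => (hpos ω).ne']
  simp

lemma measureReal_div_two_le_integral_one_sub_pow (hp : Measurable p) (h0 : ∀ ω, 0 ≤ p ω)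
    (h1 : ∀ ω, p ω < 1) {A : Set Ω} (hA : MeasurableSet A) {t : ℕ}
    (htA : ∀ ω ∈ A, t * p ω ≤ 1 / 2) : P.real A / 2 ≤ ∫ ω, (1 - p ω) ^ t ∂P := by
  have hpt : ∀ ω, A.indicator (fun _ => (1 : ℝ) / 2) ω ≤ (1 - p ω) ^ t := by
    intro ω
    by_cases hω : ω ∈ A
    · rw [indicator_of_mem hω, sub_eq_add_neg]
      linarith [htA ω hω, one_add_mul_le_pow (a := -p ω) (by linarith [h1 ω, h0 ω]) t]
    · rw [indicator_of_notMem hω]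
      exact pow_nonneg (sub_pos.2 (h1 ω)).le t
  calc P.real A / 2 = ∫ ω, A.indicator (fun _ => (1 : ℝ) / 2) ω ∂P := by
        rw [integral_indicator_const _ hA, smul_eq_mul]
        ring
    _ ≤ _ := integral_mono ((integrable_const _).indicator hA)
        (integrable_one_sub_pow hp h0 h1 t) hpt

lemma integral_one_sub_pow_le (hp : Measurable p) (h0 : ∀ ω, 0 ≤ p ω) (h1 : ∀ ω, p ω < 1)
    {A : Set Ω} (hA : MeasurableSet A) {a : ℝ} (haA : ∀ ω ∉ A, a ≤ p ω) (t : ℕ) :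
    ∫ ω, (1 - p ω) ^ t ∂P ≤ exp (-(t * a)) + P.real A := by
  have hpt : ∀ ω, (1 - p ω) ^ t ≤ exp (-(t * a)) + A.indicator (fun _ => (1 : ℝ)) ω := by
    intro ω
    by_cases hω : ω ∈ A
    · rw [indicator_of_mem hω]
      linarith [exp_pos (-(t * a)),
        pow_le_one₀ (n := t) (sub_pos.2 (h1 ω)).le (by linarith [h0 ω])]
    · rw [indicator_of_notMem hω, add_zero]
      calc (1 - p ω) ^ t ≤ exp (-p ω) ^ t :=
            pow_le_pow_left₀ (sub_pos.2 (h1 ω)).le (one_sub_le_exp_neg _) t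
        _ = exp (-(t * p ω)) := by rw [← exp_nat_mul]; ring_nf
        _ ≤ exp (-(t * a)) := exp_le_exp.2 (by nlinarith [haA ω hω, t.cast_nonneg (α := ℝ)])
  have hind : Integrable (A.indicator fun _ => (1 : ℝ)) P := (integrable_const 1).indicator hA
  calc _ ≤ ∫ ω, (exp (-(t * a)) + A.indicator (fun _ => (1 : ℝ)) ω) ∂P :=
        integral_mono (integrable_one_sub_pow hp h0 h1 t) ((integrable_const _).add hind) hpt
    _ = _ := by
        rw [integral_add (integrable_const _) hind, integral_const, integral_indicator_const _ hA]
        simp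

end OneSubPow

section Asymptotics

variable {ι : Type*} {l : Filter ι} {L : ι → ℝ} {g : ℝ → ℝ} {β : ℝ}

lemma tendsto_comp_mul_add_div (hL : Tendsto L l atTop)
    (hg : Tendsto (fun x => g x / x) atTop (𝓝 β)) {a : ℝ} (ha : 0 < a) (C : ℝ) :
    Tendsto (fun i => (g (a * L i) + C) / L i) l (𝓝 (β * a)) := by
  have h := ((hg.comp (hL.const_mul_atTop ha)).mul_const a).add
    ((tendsto_const_nhds (x := C)).div_atTop hL)
  rw [add_zero] at h
  refine h.congr' ?_
  filter_upwards [hL.eventually_gt_atTop 0] with i hi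
  simp only [Function.comp_apply]
  field_simp

lemma eventually_neg_mul_exp_le (hL : Tendsto L l atTop)
    (hg : Tendsto (fun x => g x / x) atTop (𝓝 β)) {a b c : ℝ} (ha : 0 < a) (hb : 0 < b)
    (hc : 0 < c) : ∀ᶠ i in l, -(c * exp (b * L i)) ≤ g (a * L i) := by
  have hexp : Tendsto (fun i => -(c * exp (b * L i)) / L i) l atBot := by
    refine (tendsto_neg_atTop_atBot.comp
      (((tendsto_exp_mul_div_rpow_atTop 1 b hb).const_mul_atTop hc).comp hL)).congr' ?_
    filter_upwards [hL.eventually_gt_atTop 0] with i hi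
    simp [rpow_one, neg_div, mul_div_assoc]
  filter_upwards [(tendsto_comp_mul_add_div hL hg ha 0).eventually
      (eventually_gt_nhds (sub_one_lt (β * a))), hexp.eventually (eventually_lt_atBot (β * a - 1)),
      hL.eventually_gt_atTop 0] with i hg' hexp' hi
  rw [add_zero] at hg'
  exact (div_le_div_iff_of_pos_right hi).1 (hexp'.trans hg').le

theorem tendsto_div_of_sandwich {f : ι → ℝ} {κ C : ℝ} (hL : Tendsto L l atTop)
    (hg : Tendsto (fun x => g x / x) atTop (𝓝 β)) (hκ : 0 < κ)
    (hlow : ∀ a, κ < a → ∀ᶠ i in l, g (a * L i) - C ≤ f i)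
    (hup : ∀ a ∈ Ioo 0 κ, ∀ᶠ i in l, f i ≤ g (a * L i) + C) :
    Tendsto (fun i => f i / L i) l (𝓝 (β * κ)) := by
  have hcont : Tendsto (fun a => β * a) (𝓝 κ) (𝓝 (β * κ)) := tendsto_const_nhds.mul tendsto_id
  refine tendsto_order.2 ⟨fun b hb => ?_, fun b hb => ?_⟩
  · obtain ⟨a, hba, hκa⟩ := ((hcont.mono_left nhdsWithin_le_nhds).eventually
      (eventually_gt_nhds hb) |>.and (self_mem_nhdsWithin (s := Ioi κ))).exists
    filter_upwards [hlow a hκa, (tendsto_comp_mul_add_div hL hg (hκ.trans hκa) (-C)).eventually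
      (eventually_gt_nhds hba), hL.eventually_gt_atTop 0] with i hf hb' hi
    exact hb'.trans_le (div_le_div_of_nonneg_right (by linarith) hi.le)
  · obtain ⟨a, hab, ha⟩ := ((hcont.mono_left nhdsWithin_le_nhds).eventually
      (eventually_lt_nhds hb) |>.and (Ioo_mem_nhdsLT hκ)).exists
    filter_upwards [hup a ha, (tendsto_comp_mul_add_div hL hg ha.1 C).eventually
      (eventually_lt_nhds hab), hL.eventually_gt_atTop 0] with i hf hb' hi
    exact (div_le_div_of_nonneg_right hf hi.le).trans_lt hb'

lemma eventually_pos_of_tendsto_log_div {G : ℝ → ℝ} {α : ℝ} (hG : ∀ x, 0 ≤ G x) (hα : 0 < α)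
    (h : Tendsto (fun x => log (G x) / x) atTop (𝓝 (-α))) : ∀ᶠ x in atTop, 0 < G x := by
  filter_upwards [h.eventually (eventually_lt_nhds (neg_neg_of_pos hα))] with x hx
  refine (hG x).lt_of_ne' fun h0 => ?_
  rw [h0, log_zero, zero_div] at hx
  exact lt_irrefl _ hx

end Asymptotics

lemma tendsto_log_natCast_atTop : Tendsto (fun t : ℕ => log t) atTop atTop :=
  tendsto_log_atTop.comp tendsto_natCast_atTop_atTop

lemma mul_exp_neg_mul_log {t : ℝ} (ht : 0 < t) (s : ℝ) :
    t * exp (-(s * log t)) = exp ((1 - s) * log t) := by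
  rw [show (1 - s) * log t = log t + -(s * log t) by ring, exp_add, exp_log ht]

section Aloha

variable {Ω : Type*} {mΩ : MeasurableSpace Ω} {P : Measure Ω} [IsProbabilityMeasure P]
  {ν α : ℝ} {M : Ω → ℕ}

lemma eventually_log_tail_sub_log_two_le (hν : 0 < ν) (hα : 0 < α) (hMm : Measurable M)
    (htail : Tendsto (fun x : ℝ => log (P.real {ω | x < M ω}) / x) atTop (𝓝 (-α)))
    {a : ℝ} (ha : ν⁻¹ < a) :
    ∀ᶠ t : ℕ in atTop, log (P.real {ω | a * log t < M ω}) - log 2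
      ≤ log (∫ ω, (1 - successProb ν (M ω)) ^ t ∂P) := by
  have ha0 : 0 < a := (inv_pos.2 hν).trans ha
  have hd : 0 < ν * a - 1 := by
    rw [inv_lt_iff_one_lt_mul₀ hν] at ha
    linarith
  have hsmall : Tendsto (fun L => exp ν * (a * L + ν⁻¹) * exp ((1 - ν * a) * L)) atTop (𝓝 0) := by
    have h := ((tendsto_rpow_mul_exp_neg_mul_atTop_nhds_zero 1 _ hd).const_mul a).add
      ((tendsto_rpow_mul_exp_neg_mul_atTop_nhds_zero 0 _ hd).const_mul ν⁻¹) |>.const_mul (exp ν)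
    simp only [rpow_one, rpow_zero, neg_sub, mul_zero, add_zero] at h
    refine h.congr fun L => ?_
    ring
  have hpm : Measurable fun ω => successProb ν (M ω) := by fun_prop
  filter_upwards
    [(hsmall.comp tendsto_log_natCast_atTop).eventually (eventually_le_nhds one_half_pos),
    (tendsto_log_natCast_atTop.const_mul_atTop ha0).eventually
      (eventually_pos_of_tendsto_log_div (fun _ => measureReal_nonneg) hα htail),
    eventually_gt_atTop 0] with t hsmall_t htail_t ht
  have ht' : (0 : ℝ) < t := Nat.cast_pos.2 ht
  rw [← log_div htail_t.ne' two_ne_zero]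
  refine log_le_log (by positivity) (measureReal_div_two_le_integral_one_sub_pow hpm
    (fun ω => successProb_nonneg hν.le _) (fun ω => successProb_lt_one hν.le _)
    (measurableSet_lt measurable_const (by fun_prop)) fun ω hω => ?_)
  calc t * successProb ν (M ω)
      ≤ t * (exp ν * (a * log t + ν⁻¹) * exp (-(ν * (a * log t)))) := by
        gcongr
        exact successProb_le_of_le hν (by positivity) hω.le
    _ = exp ν * (a * log t + ν⁻¹) * exp ((1 - ν * a) * log t) := by
        rw [← mul_exp_neg_mul_log ht', ← mul_assoc ν]
        ring
    _ ≤ 1 / 2 := hsmall_t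

lemma eventually_log_le_log_tail_add_log_two (hν : 0 < ν) (hα : 0 < α) (hMm : Measurable M)
    (hM : ∀ ω, 1 ≤ M ω)
    (htail : Tendsto (fun x : ℝ => log (P.real {ω | x < M ω}) / x) atTop (𝓝 (-α)))
    {a : ℝ} (ha : a ∈ Ioo 0 ν⁻¹) :
    ∀ᶠ t : ℕ in atTop, log (∫ ω, (1 - successProb ν (M ω)) ^ t ∂P)
      ≤ log (P.real {ω | a * log t < M ω}) + log 2 := by
  have hb : 0 < 1 - ν * a := by
    have := mul_lt_mul_of_pos_left ha.2 hν
    rw [mul_inv_cancel₀ hν.ne'] at this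
    linarith
  have hc : 0 < 1 - exp (-ν) := sub_pos.2 (exp_lt_one_iff.2 (neg_lt_zero.2 hν))
  have hpm : Measurable fun ω => successProb ν (M ω) := by fun_prop
  filter_upwards [eventually_neg_mul_exp_le tendsto_log_natCast_atTop htail ha.1 hb hc,
    (tendsto_log_natCast_atTop.const_mul_atTop ha.1).eventually
      (eventually_pos_of_tendsto_log_div (fun _ => measureReal_nonneg) hα htail),
    eventually_gt_atTop 0] with t hexp htail_t ht
  have hF := integral_one_sub_pow_le (P := P) (A := {ω | a * log t < M ω}) hpm
    (fun ω => successProb_nonneg hν.le _) (fun ω => successProb_lt_one hν.le _)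
    (measurableSet_lt measurable_const (by fun_prop))
    (fun ω hω => one_sub_exp_mul_exp_le_successProb hν.le (hM ω) (not_lt.1 hω)) t
  rw [mul_left_comm, ← mul_assoc ν, mul_exp_neg_mul_log (Nat.cast_pos.2 ht)] at hF
  rw [← log_mul htail_t.ne' two_ne_zero]
  refine log_le_log (integral_one_sub_pow_pos hpm (fun ω => successProb_nonneg hν.le _)
    (fun ω => successProb_lt_one hν.le _) t) ?_
  linarith [(le_log_iff_exp_le htail_t).1 hexp]

end Aloha

/-- Theorem 5 (T-part, eq. (33)): in slotted ALOHA with a random number `M` of backlogged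
users having an asymptotically exponential tail of rate `α`, the time `T` between successes
with `P[T > t] = E[(1 - M e^{-(M-1)ν}(1-e^{-ν}))^t]` has a power law tail of index `α/ν`. -/
theorem stmt10 {Ω : Type*} {mΩ : MeasurableSpace Ω} (P : Measure Ω) [IsProbabilityMeasure P]
    (ν α : ℝ) (hν : 0 < ν) (hα : 0 < α)
    (M : Ω → ℕ) (hMm : Measurable M) (hMpos : ∀ ω, 1 ≤ M ω)
    (htail : Tendsto (fun x : ℝ => Real.log (P {ω | (M ω : ℝ) > x}).toReal / x) atTop
      (nhds (-α))) :
    Tendsto (fun t : ℕ =>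
        Real.log (∫ ω,
            (1 - (M ω : ℝ) * Real.exp (-((M ω : ℝ) - 1) * ν) * (1 - Real.exp (-ν))) ^ t ∂P)
          / Real.log t) atTop (nhds (-(α / ν))) := by
  rw [show -(α / ν) = -α * ν⁻¹ by ring]
  -- `htail` and the integrand agree with `P.real {ω | x < M ω}` and `successProb` by unfolding.
  exact tendsto_div_of_sandwich tendsto_log_natCast_atTop htail
    (inv_pos.2 hν) (fun a ha => eventually_log_tail_sub_log_two_le hν hα hMm htail ha)
    (fun a ha => eventually_log_le_log_tail_add_log_two hν hα hMm hMpos htail ha)
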